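/- Let $0 < \nu < 1$, $a \in \mathbb{Z}$, $f : \mathbb{N}_{a+1} \times \mathbb{R} \to \mathbb{R}$, and $c \in \mathbb{R}$. A function $y : \mathbb{N}_a \to \mathbb{R}$ satisfies $\nabla_{a-1}^{\nu} y(t) = f(t, y(t))$ for all $t \in \mathbb{N}_{a+1}$ together with $y(a) = c$ if and only if $y(t) = \frac{(t-a+1)^{\overline{\nu-1}}}{\Gamma(\nu)}\, c + \nabla_a^{-\nu} f(t, y(t))$ for all $t \in \mathbb{N}_a$. -/

import Mathlib

open Filter Finset

/-- Generalized rising function `x^{\overline r} = Γ(x+r)/Γ(x)` (with the usual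
vanishing convention, since `Real.Gamma` vanishes at nonpositive integers and
division by zero is zero in Lean). -/
noncomputable def rfac (x r : ℝ) : ℝ := Real.Gamma (x + r) / Real.Gamma x

/-- Backward (nabla) difference. -/
def nbl (f : ℤ → ℝ) (t : ℤ) : ℝ := f t - f (t - 1)

/-- The `ν`-th order nabla fractional sum based at `a`. -/
noncomputable def nsum (ν : ℝ) (a : ℤ) (f : ℤ → ℝ) (t : ℤ) : ℝ :=
  (1 / Real.Gamma ν) * ∑ s ∈ Finset.Icc (a + 1) t, rfac ((t : ℝ) - (s : ℝ) + 1) (ν - 1) * f s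

/-- The `ν`-th order nabla fractional difference based at `a`, for `0 < ν < 1`. -/
noncomputable def ndiff (ν : ℝ) (a : ℤ) (f : ℤ → ℝ) (t : ℤ) : ℝ :=
  nbl (nsum (1 - ν) a f) t


/-!
Put `G := Function.update (fun s => f s (y s)) a c`; the right-hand side of the theorem is then
`nsum ν (a - 1) G`. The Chu–Vandermonde identity for rising factorials is a discrete Beta
integral for the kernels `rfac`, which gives the semigroup law
`nsum β b ∘ nsum α b = nsum (α + β) b`. Since `nsum 1 b` is a plain partial sum, `ndiff ν b`
undoes `nsum ν b` at every `t ≥ b + 1`.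
On the other hand `ndiff ν (a - 1) y t - y t` only involves `y` on `[a, t - 1]`, so both
conditions determine `y` recursively from `y a = c`, and they agree by induction on `t`.
-/

theorem ascPochhammer_eval_add {R : Type*} [CommRing R] (x y : R) (n : ℕ) :
    (ascPochhammer R n).eval (x + y) = ∑ p ∈ antidiagonal n,
      n.choose p.1 * ((ascPochhammer R p.1).eval x * (ascPochhammer R p.2).eval y) := by
  induction n with
  | zero => simp
  | succ n ih =>
    rw [sum_antidiagonal_choose_succ_mul
        (fun i j => (ascPochhammer R i).eval x * (ascPochhammer R j).eval y),
      ascPochhammer_succ_eval, ih, sum_mul, ← sum_add_distrib]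
    refine sum_congr rfl fun p hp => ?_
    rw [HasAntidiagonal.mem_antidiagonal] at hp
    rw [Nat.choose_symm_of_eq_add hp.symm, ascPochhammer_succ_eval, ascPochhammer_succ_eval, ← hp]
    push_cast
    ring

theorem Real.Gamma_add_nat_eq_ascPochhammer_mul {x : ℝ} (hx : 0 < x) (n : ℕ) :
    Real.Gamma (x + n) = (ascPochhammer ℝ n).eval x * Real.Gamma x := by
  induction n with
  | zero => simp
  | succ n ih =>
    rw [Nat.cast_succ, ← add_assoc, Real.Gamma_add_one (by positivity), ih,
      ascPochhammer_succ_eval]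
    ring

theorem sum_antidiagonal_Gamma_div_factorial {α β : ℝ} (hα : 0 < α) (hβ : 0 < β) (n : ℕ) :
    ∑ p ∈ antidiagonal n,
        Real.Gamma (α + p.1) / p.1.factorial * (Real.Gamma (β + p.2) / p.2.factorial)
      = Real.Gamma α * Real.Gamma β / Real.Gamma (α + β) *
          (Real.Gamma (α + β + n) / n.factorial) := by
  have hαβ : Real.Gamma (α + β) ≠ 0 := (Real.Gamma_pos_of_pos (add_pos hα hβ)).ne'
  rw [Real.Gamma_add_nat_eq_ascPochhammer_mul (add_pos hα hβ), ascPochhammer_eval_add, sum_mul,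
    sum_div, mul_sum]
  refine sum_congr rfl fun p hp => ?_
  rw [HasAntidiagonal.mem_antidiagonal] at hp
  rw [Real.Gamma_add_nat_eq_ascPochhammer_mul hα, Real.Gamma_add_nat_eq_ascPochhammer_mul hβ,
    ← hp, ← Nat.add_choose_mul_factorial_mul_factorial, Nat.choose_symm_add]
  have hchoose : ((p.1 + p.2).choose p.2 : ℝ) ≠ 0 :=
    Nat.cast_ne_zero.2 (Nat.choose_pos (Nat.le_add_left _ _)).ne'
  push_cast
  field_simp

theorem sum_Icc_add_eq_sum_antidiagonal {M : Type*} [AddCommMonoid M] (f : ℤ → M) (u : ℤ)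
    (n : ℕ) :
    ∑ s ∈ Icc u (u + n), f s = ∑ p ∈ antidiagonal n, f (u + p.1) := by
  refine sum_nbij' (fun s => ((s - u).toNat, (u + n - s).toNat)) (fun p => u + p.1)
    ?_ ?_ ?_ ?_ ?_ <;> intro x hx <;> simp_all [Prod.ext_iff] <;> omega

theorem rfac_natCast_add_one (m : ℕ) (r : ℝ) :
    rfac ((m : ℝ) + 1) (r - 1) = Real.Gamma (r + m) / m.factorial := by
  rw [rfac, ← Real.Gamma_nat_eq_factorial]
  congr 2
  ring

theorem sum_Icc_rfac_mul_rfac {α β : ℝ} (hα : 0 < α) (hβ : 0 < β) {u t : ℤ}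
    (h : u ≤ t) :
    ∑ s ∈ Icc u t, rfac ((t : ℝ) - s + 1) (β - 1) * rfac ((s : ℝ) - u + 1) (α - 1)
      = Real.Gamma α * Real.Gamma β / Real.Gamma (α + β) *
          rfac ((t : ℝ) - u + 1) (α + β - 1) := by
  obtain ⟨n, rfl⟩ := Int.le.dest h
  have hn : ((u + n : ℤ) : ℝ) - u + 1 = (n : ℝ) + 1 := by push_cast; ring
  rw [hn, rfac_natCast_add_one, ← sum_antidiagonal_Gamma_div_factorial hα hβ,
    sum_Icc_add_eq_sum_antidiagonal]
  refine sum_congr rfl fun p hp => ?_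
  rw [HasAntidiagonal.mem_antidiagonal] at hp
  have h1 : ((u + n : ℤ) : ℝ) - ((u + p.1 : ℤ) : ℝ) + 1 = (p.2 : ℝ) + 1 := by
    rw [← hp]; push_cast; ring
  have h2 : ((u + p.1 : ℤ) : ℝ) - u + 1 = (p.1 : ℝ) + 1 := by push_cast; ring
  rw [h1, h2, rfac_natCast_add_one, rfac_natCast_add_one, mul_comm]

section NablaSum

variable {ν : ℝ} {b t : ℤ} {f g : ℤ → ℝ}

theorem nsum_congr (h : ∀ s ∈ Icc (b + 1) t, f s = g s) : nsum ν b f t = nsum ν b g t := by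
  unfold nsum
  rw [sum_congr rfl fun s hs => by rw [h s hs]]

theorem nsum_eq_add_sum (hν : Real.Gamma ν ≠ 0) (h : b + 1 ≤ t) :
    nsum ν b f t = f t + 1 / Real.Gamma ν *
      ∑ s ∈ Icc (b + 1) (t - 1), rfac ((t : ℝ) - s + 1) (ν - 1) * f s := by
  rw [nsum, ← insert_Icc_sub_one_right_eq_Icc h, sum_insert (by simp), sub_self, zero_add,
    rfac, add_sub_cancel, Real.Gamma_one, div_one, mul_add, ← mul_assoc, one_div_mul_cancel hν,
    one_mul]

theorem nsum_nsum {α β : ℝ} (hα : 0 < α) (hβ : 0 < β) :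
    nsum β b (nsum α b g) t = nsum (α + β) b g t := by
  have hΓα := (Real.Gamma_pos_of_pos hα).ne'
  have hΓβ := (Real.Gamma_pos_of_pos hβ).ne'
  have swap : ∑ s ∈ Icc (b + 1) t, rfac ((t : ℝ) - s + 1) (β - 1) *
        ∑ u ∈ Icc (b + 1) s, rfac ((s : ℝ) - u + 1) (α - 1) * g u
      = ∑ u ∈ Icc (b + 1) t, (∑ s ∈ Icc u t,
          rfac ((t : ℝ) - s + 1) (β - 1) * rfac ((s : ℝ) - u + 1) (α - 1)) * g u := by
    simp_rw [mul_sum, sum_mul, mul_assoc]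
    exact sum_comm' fun s u => by simp only [mem_Icc]; omega
  have conv : ∀ u ∈ Icc (b + 1) t, (∑ s ∈ Icc u t,
        rfac ((t : ℝ) - s + 1) (β - 1) * rfac ((s : ℝ) - u + 1) (α - 1)) * g u
      = Real.Gamma α * Real.Gamma β / Real.Gamma (α + β) *
          (rfac ((t : ℝ) - u + 1) (α + β - 1) * g u) := fun u hu => by
    rw [sum_Icc_rfac_mul_rfac hα hβ (mem_Icc.1 hu).2, mul_assoc]
  simp only [nsum, mul_left_comm _ (1 / Real.Gamma α), ← mul_sum, swap, sum_congr rfl conv]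
  field_simp

theorem nsum_one : nsum 1 b g t = ∑ s ∈ Icc (b + 1) t, g s := by
  simp only [nsum, sub_self, Real.Gamma_one, div_one, one_mul]
  refine sum_congr rfl fun s hs => ?_
  rw [mem_Icc] at hs
  have : (0 : ℝ) < t - s + 1 := by
    have : (s : ℝ) ≤ t := by exact_mod_cast hs.2
    linarith
  rw [rfac, add_zero, div_self (Real.Gamma_pos_of_pos this).ne', one_mul]

theorem nbl_sum_Icc (h : b + 1 ≤ t) : nbl (fun t => ∑ s ∈ Icc (b + 1) t, g s) t = g t := by
  rw [nbl, ← insert_Icc_sub_one_right_eq_Icc h, sum_insert (by simp), add_sub_cancel_right]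

theorem ndiff_nsum (h1 : 0 < ν) (h2 : ν < 1) (h : b + 1 ≤ t) :
    ndiff ν b (nsum ν b g) t = g t := by
  have : nsum (1 - ν) b (nsum ν b g) = fun t => ∑ s ∈ Icc (b + 1) t, g s := by
    funext t
    rw [nsum_nsum h1 (sub_pos.2 h2), add_sub_cancel, nsum_one]
  rw [ndiff, this, nbl_sum_Icc h]

theorem ndiff_sub_self_congr (h2 : ν < 1) (h : b + 1 ≤ t)
    (hfg : ∀ s ∈ Icc (b + 1) (t - 1), f s = g s) :
    ndiff ν b f t - f t = ndiff ν b g t - g t := by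
  have hΓ := (Real.Gamma_pos_of_pos (sub_pos.2 h2)).ne'
  have hsum : ∑ s ∈ Icc (b + 1) (t - 1), rfac ((t : ℝ) - s + 1) (1 - ν - 1) * f s
      = ∑ s ∈ Icc (b + 1) (t - 1), rfac ((t : ℝ) - s + 1) (1 - ν - 1) * g s :=
    sum_congr rfl fun s hs => by rw [hfg s hs]
  simp only [ndiff, nbl, nsum_eq_add_sum hΓ h, hsum, nsum_congr hfg]
  ring

theorem nsum_sub_one_update {a : ℤ} (c : ℝ) (h : a ≤ t) :
    nsum ν (a - 1) (Function.update g a c) t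
      = rfac ((t : ℝ) - a + 1) (ν - 1) / Real.Gamma ν * c + nsum ν a g t := by
  simp only [nsum, sub_add_cancel]
  rw [← insert_Icc_add_one_left_eq_Icc h, sum_insert (by simp), Function.update_self, mul_add,
    sum_congr rfl fun s hs => by rw [Function.update_of_ne (by simp at hs; omega)]]
  ring

end NablaSum

theorem stmt5 (ν : ℝ) (h1 : 0 < ν) (h2 : ν < 1) (a : ℤ) (f : ℤ → ℝ → ℝ) (c : ℝ)
    (y : ℤ → ℝ) :
    ((∀ t, a + 1 ≤ t → ndiff ν (a - 1) y t = f t (y t)) ∧ y a = c) ↔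
    (∀ t, a ≤ t → y t = rfac ((t : ℝ) - (a : ℝ) + 1) (ν - 1) / Real.Gamma ν * c
      + nsum ν a (fun s => f s (y s)) t) := by
  set G := Function.update (fun s => f s (y s)) a c
  have hΦ : ∀ t, a ≤ t → rfac ((t : ℝ) - (a : ℝ) + 1) (ν - 1) / Real.Gamma ν * c
      + nsum ν a (fun s => f s (y s)) t = nsum ν (a - 1) G t :=
    fun t ht => (nsum_sub_one_update c ht).symm
  have hbase : nsum ν (a - 1) G a = c := by
    rw [nsum_eq_add_sum (Real.Gamma_pos_of_pos h1).ne' (by omega), sub_add_cancel,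
      Icc_eq_empty (by omega), sum_empty, mul_zero, add_zero]
    exact Function.update_self _ _ _
  have step : ∀ t, a + 1 ≤ t → (∀ s ∈ Icc a (t - 1), y s = nsum ν (a - 1) G s) →
      (ndiff ν (a - 1) y t = f t (y t) ↔ y t = nsum ν (a - 1) G t) := by
    intro t ht hy
    have hloc := ndiff_sub_self_congr (b := a - 1) (t := t) h2 (by omega)
      fun s hs => hy s (by rwa [sub_add_cancel] at hs)
    have hGt : G t = f t (y t) := Function.update_of_ne (by omega) _ _
    rw [ndiff_nsum h1 h2 (by omega), hGt] at hloc
    constructor <;> intro <;> linarith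
  simp +contextual only [hΦ]
  constructor
  · rintro ⟨hdiff, hya⟩ t
    induction t using Int.strongRec (m := a) with
    | lt t hlt => exact fun ht => absurd ht (not_le.2 hlt)
    | ge t ht ih =>
      intro _
      rcases ht.eq_or_lt with rfl | hlt
      · rw [hya, hbase]
      · refine (step t hlt fun s hs => ?_).1 (hdiff t hlt)
        exact ih s (by simp at hs; omega) (mem_Icc.1 hs).1
  · intro hy
    exact ⟨fun t ht => (step t ht fun s hs => hy s (mem_Icc.1 hs).1).2 (hy t (by omega)),
      by rw [hy a le_rfl, hbase]⟩
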